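/- Let K be a henselian valued field with valuation ring O, maximal ideal m, residue field F. Let f ∈ O[X] be monic such that f̄ has no zero in F, and suppose there exists a ∈ O with f'(a) ∉ m. Then the set U = f(K)⁻¹ − f(K)⁻¹ = {f(x)⁻¹ − f(y)⁻¹ : x, y ∈ K} satisfies m ⊆ U ⊆ O. -/

import Mathlib

/-!
Hensel's lemma shows that `f(O)` contains a whole coset `f(a) + m`, since `f'(a)` is a unit.
Every `f(b)`, `b ∈ O`, is a unit because `f̄` has no zero, so `u ↦ (f(a)⁻¹ + u)⁻¹` maps `m` into
that coset, and `f(a)⁻¹ + m ⊆ f(K)⁻¹` gives `m ⊆ U`. Conversely, if `f(x)⁻¹ ∉ O` for some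
`x ∈ K`, then `f(x) ∈ O`, so `x` is integral over the integrally closed ring `O`; hence `x ∈ O`
and `f(x)` is a unit of `O` after all. Thus `f(K)⁻¹ ⊆ O` and `U ⊆ O`.
-/

open Polynomial IsLocalRing

theorem Polynomial.natDegree_ne_zero_of_isUnit_eval_derivative {R : Type*} [CommRing R]
    [Nontrivial R] {f : R[X]} {a : R} (hda : IsUnit (f.derivative.eval a)) :
    f.natDegree ≠ 0 := by
  intro h
  simp [derivative_of_natDegree_zero h] at hda

theorem HenselianLocalRing.exists_eval_eq {R : Type*} [CommRing R] [HenselianLocalRing R]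
    {f : R[X]} (hf : f.Monic) {a c : R} (hda : IsUnit (f.derivative.eval a))
    (hac : f.eval a - c ∈ maximalIdeal R) : ∃ b, f.eval b = c := by
  have hdeg : (C c).degree < f.degree :=
    degree_C_le.trans_lt <| natDegree_pos_iff_degree_pos.mp <|
      Nat.pos_of_ne_zero (natDegree_ne_zero_of_isUnit_eval_derivative hda)
  obtain ⟨b, hb, -⟩ := HenselianLocalRing.is_henselian (f - C c) (hf.sub_of_left hdeg) a
    (by simpa using hac) (by simpa using hda)
  exact ⟨b, sub_eq_zero.mp (by simpa using hb)⟩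

theorem IsLocalRing.isUnit_eval_of_forall_eval_residue_ne_zero {R : Type*} [CommRing R]
    [IsLocalRing R] {f : R[X]} (hres : ∀ z : ResidueField R, (f.map (residue R)).eval z ≠ 0)
    (b : R) : IsUnit (f.eval b) := by
  by_contra h
  apply hres (residue R b)
  rw [eval_map, eval₂_at_apply, residue_eq_zero_iff]
  exact h

theorem IsIntegrallyClosed.exists_algebraMap_eq_of_aeval_eq {R K : Type*} [CommRing R]
    [CommRing K] [Algebra R K] [IsFractionRing R K] [IsIntegrallyClosed R] {f : R[X]}
    (hf : f.Monic) (hdeg : f.natDegree ≠ 0) {x : K} {t : R} (hx : aeval x f = algebraMap R K t) :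
    ∃ y, algebraMap R K y = x :=
  isIntegral_iff.mp <| IsIntegral.of_aeval_monic hf hdeg (hx ▸ isIntegral_algebraMap)

namespace ValuationSubring

variable {K : Type*} [Field K] {O : ValuationSubring K}

theorem coe_units_inv (c : Oˣ) : ((c⁻¹ : Oˣ) : K) = (c : K)⁻¹ :=
  map_units_inv O.subtype c

theorem aeval_coe (f : O[X]) (b : O) : aeval (b : K) f = f.eval b :=
  aeval_algebraMap_apply_eq_algebraMap_eval b f

theorem inv_coe_mem_of_isUnit {t : O} (ht : IsUnit t) : (t : K)⁻¹ ∈ O := by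
  obtain ⟨c, rfl⟩ := ht
  rw [← coe_units_inv]
  exact SetLike.coe_mem _

theorem inv_aeval_mem {f : O[X]} (hf : f.Monic) (hdeg : f.natDegree ≠ 0)
    (hunit : ∀ b : O, IsUnit (f.eval b)) (x : K) : (aeval x f)⁻¹ ∈ O := by
  rcases O.mem_or_inv_mem (aeval x f) with hx | hx
  · obtain ⟨y, rfl⟩ :=
      IsIntegrallyClosed.exists_algebraMap_eq_of_aeval_eq hf hdeg (x := x) (t := ⟨_, hx⟩) rfl
    rw [aeval_algebraMap_apply_eq_algebraMap_eval]
    exact inv_coe_mem_of_isUnit (hunit y)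
  · exact hx

theorem exists_inv_aeval_sub_inv_aeval_eq [HenselianLocalRing O] {f : O[X]} (hf : f.Monic)
    (hunit : ∀ b : O, IsUnit (f.eval b)) {a : O} (hda : IsUnit (f.derivative.eval a))
    {u : O} (hu : u ∈ maximalIdeal O) :
    ∃ b : O, (aeval (b : K) f)⁻¹ - (aeval (a : K) f)⁻¹ = u := by
  obtain ⟨c, hc⟩ := hunit a
  obtain ⟨e, he⟩ : IsUnit ((c⁻¹ : Oˣ) + u : O) := by
    refine (isUnit_or_isUnit_of_isUnit_add (b := -u) (by simp)).resolve_right ?_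
    simpa [mem_maximalIdeal, mem_nonunits_iff] using hu
  have hclose : f.eval a - (e⁻¹ : Oˣ) ∈ maximalIdeal O := by
    have hce : f.eval a - (e⁻¹ : Oˣ) = c * (e⁻¹ : Oˣ) * u := by
      rw [← hc]
      linear_combination (↑c * ↑e⁻¹ : O) * he + (↑e⁻¹ : O) * c.mul_inv - (c : O) * e.mul_inv
    rw [hce]
    exact Ideal.mul_mem_left _ _ hu
  obtain ⟨b, hb⟩ := HenselianLocalRing.exists_eval_eq hf hda hclose
  refine ⟨b, ?_⟩
  rw [aeval_coe, aeval_coe, hb, ← hc, coe_units_inv, inv_inv, ← coe_units_inv, he]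
  push_cast
  ring

end ValuationSubring

/-- For a henselian valued field `K` with valuation ring `O` and maximal
ideal `m`, `f ∈ O[X]` monic whose reduction has no zero in the residue field, such that
there is `a ∈ O` with `f'(a) ∉ m`, the set `U = {f(x)⁻¹ − f(y)⁻¹ : x, y ∈ K}` satisfies
`m ⊆ U ⊆ O`. -/
theorem statement3 (K : Type*) [Field K] (O : ValuationSubring K) [HenselianLocalRing O]
    (f : Polynomial O) (hf : f.Monic)
    (hres : ∀ z : IsLocalRing.ResidueField O,
      Polynomial.eval z (f.map (IsLocalRing.residue O)) ≠ 0)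
    (ha : ∃ a : O, Polynomial.eval a f.derivative ∉ IsLocalRing.maximalIdeal O) :
    (∀ u ∈ IsLocalRing.maximalIdeal O, ∃ x y : K,
      (u : K) = (Polynomial.eval x (f.map O.subtype))⁻¹ -
        (Polynomial.eval y (f.map O.subtype))⁻¹) ∧
    (∀ x y : K, (Polynomial.eval x (f.map O.subtype))⁻¹ -
        (Polynomial.eval y (f.map O.subtype))⁻¹ ∈ O) := by
  obtain ⟨a, hda⟩ := ha
  rw [mem_maximalIdeal, mem_nonunits_iff, not_not] at hda
  have hunit := isUnit_eval_of_forall_eval_residue_ne_zero hres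
  have heval : ∀ x : K, (f.map O.subtype).eval x = aeval x f := fun x => eval_map_algebraMap f x
  simp only [heval]
  refine ⟨fun u hu => ?_, fun x y => ?_⟩
  · obtain ⟨b, hb⟩ := ValuationSubring.exists_inv_aeval_sub_inv_aeval_eq hf hunit hda hu
    exact ⟨b, a, hb.symm⟩
  · have hdeg := natDegree_ne_zero_of_isUnit_eval_derivative hda
    exact O.sub_mem (ValuationSubring.inv_aeval_mem hf hdeg hunit x)
      (ValuationSubring.inv_aeval_mem hf hdeg hunit y)
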